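/- arXiv:2006.16963 — 4 statements merged into one kernel-verified Lean document; each statement's English description precedes it below -/
import Mathlib

section
/- Let L ≥ 2 and let f(ε) = 2·(((1+ε²)^L − 1)^{1/2} − √L·ε)/((1+ε²)^L − 1)^{1/2} for ε > 0. Then there exist constants C, ε₀ > 0, independent of L, such that f(ε) ≤ C·L·ε² whenever ε ≤ ε₀/√L. -/
/-- The squared distance `f(ε)` between the normalized bond-dimension-2 MPS approximation and
the normalized W-state on `L` sites:
`f(ε) = 2(((1+ε²)^L − 1)^{1/2} − √L ε)/((1+ε²)^L − 1)^{1/2}`. -/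
noncomputable def wOverlapError (L : ℕ) (ε : ℝ) : ℝ :=
  2 * ((Real.sqrt ((1 + ε ^ 2) ^ L - 1) - Real.sqrt L * ε) /
    Real.sqrt ((1 + ε ^ 2) ^ L - 1))

theorem wOverlapError_bound :
    ∃ C > 0, ∃ ε₀ > 0, ∀ L : ℕ, 2 ≤ L → ∀ ε : ℝ, 0 < ε →
      ε ≤ ε₀ / Real.sqrt L → wOverlapError L ε ≤ C * L * ε ^ 2 := by
  refine ⟨2, by norm_num, 1, by norm_num, fun L hL ε hε hεL => ?_⟩
  have hL1 : (1:ℝ) ≤ L := by exact_mod_cast hL.trans' (by norm_num)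
  have hLpos : (0:ℝ) < L := by linarith
  set x : ℝ := ε ^ 2 with hxdef
  have hx : 0 < x := by positivity
  -- L * x ≤ 1
  have hsL : (0:ℝ) < Real.sqrt L := Real.sqrt_pos.mpr hLpos
  have hε1 : ε ^ 2 ≤ (1 / Real.sqrt L) ^ 2 := by
    have := hεL
    rw [div_eq_mul_inv, one_mul] at this
    exact pow_le_pow_left₀ hε.le (by simpa [one_div] using this) 2
  have hLx : (L : ℝ) * x ≤ 1 := by
    have : ((1:ℝ) / Real.sqrt L) ^ 2 = 1 / L := by
      rw [div_pow, one_pow, Real.sq_sqrt hLpos.le]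
    rw [this] at hε1
    calc (L:ℝ) * x ≤ (L:ℝ) * (1 / L) := by
          exact mul_le_mul_of_nonneg_left hε1 hLpos.le
      _ = 1 := by field_simp
  set S : ℝ := (1 + x) ^ L - 1 with hSdef
  -- lower bound: L * x ≤ S
  have h1 : (L : ℝ) * x ≤ S := by
    have := one_add_mul_le_pow (a := x) (by linarith : (-2:ℝ) ≤ x) L
    simp only [hSdef]
    linarith
  have hLxpos : 0 < (L:ℝ) * x := by positivity
  have hS : 0 < S := lt_of_lt_of_le hLxpos h1
  -- upper bound: S ≤ L*x + (L*x)^2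
  have h2 : S ≤ (L:ℝ) * x + ((L:ℝ) * x) ^ 2 := by
    have hpow : (1 + x) ^ L ≤ Real.exp ((L:ℝ) * x) := by
      calc (1 + x) ^ L ≤ (Real.exp x) ^ L := by
            apply pow_le_pow_left₀ (by linarith)
            linarith [Real.add_one_le_exp x]
        _ = Real.exp ((L:ℝ) * x) := by
            rw [← Real.exp_nat_mul]
    have hexp : Real.exp ((L:ℝ) * x) ≤ 1 + (L:ℝ)*x + ((L:ℝ)*x)^2 := by
      have := Real.exp_bound' hLxpos.le hLx (n := 2) (by norm_num)
      have hsum : (∑ m ∈ Finset.range 2, ((L:ℝ)*x) ^ m / m.factorial) = 1 + (L:ℝ)*x := by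
        simp [Finset.sum_range_succ]
      rw [hsum] at this
      have h34 : ((L:ℝ)*x) ^ 2 * (2 + 1) / ((2:ℕ).factorial * 2) = (3/4) * ((L:ℝ)*x)^2 := by
        norm_num [Nat.factorial]
        ring
      nlinarith [sq_nonneg ((L:ℝ)*x)]
    simp only [hSdef]
    linarith
  -- rewrite √L * ε = √(L*x)
  have hsqrt : Real.sqrt L * ε = Real.sqrt ((L:ℝ) * x) := by
    rw [Real.sqrt_mul hLpos.le, hxdef, Real.sqrt_sq hε.le]
  have hsS : 0 < Real.sqrt S := Real.sqrt_pos.mpr hS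
  -- f = 2 * (1 - √(Lx/S))
  have hr : (L:ℝ) * x / S ≤ 1 := (div_le_one hS).mpr h1
  have hrpos : 0 ≤ (L:ℝ) * x / S := by positivity
  have hkey : wOverlapError L ε ≤ 2 * (1 - (L:ℝ) * x / S) := by
    unfold wOverlapError
    have hSeq : (1 + ε ^ 2) ^ L - 1 = S := rfl
    rw [hSeq, hsqrt, sub_div, div_self hsS.ne',
      ← Real.sqrt_div (by positivity) S]
    have hsq : (L:ℝ) * x / S ≤ Real.sqrt ((L:ℝ) * x / S) := by
      nlinarith [Real.sq_sqrt hrpos, Real.sqrt_nonneg ((L:ℝ) * x / S), hr]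
    linarith
  have hfinal : 2 * (1 - (L:ℝ) * x / S) ≤ 2 * ((L:ℝ) * x) := by
    have : 1 - (L:ℝ) * x / S ≤ (L:ℝ) * x := by
      have hA : S - (L:ℝ) * x ≤ (L:ℝ) * x * S := by nlinarith
      have heq : 1 - (L:ℝ) * x / S = (S - (L:ℝ) * x) / S := by field_simp
      rw [heq]
      exact (div_le_iff₀ hS).mpr hA
    linarith
  calc wOverlapError L ε ≤ 2 * ((L:ℝ) * x) := hkey.trans hfinal
    _ = 2 * L * ε ^ 2 := by rw [hxdef]; ring
end

section
/- Fix integers a ≥ 1 and L ≥ 1, and for ε ∈ ℂ let |φ(ε)⟩ = ∑_{i=0}^{a} ε^i |i⟩ ∈ ℂ^{a+1}. Then, for every ε, ∑_{j=0}^{a} (-1)^{a-j} C(a,j) |φ(jε)⟩^{⊗L} = ∑_{α≥0} ε^α · c_{α,a} · |χ_{α,a,L}⟩, where c_{α,a} = ∑_{j=0}^{a} (-1)^{a-j} C(a,j) j^α and |χ_{α,a,L}⟩ = ∑_{i₁+…+i_L = α, 0 ≤ i_k ≤ a} |i₁,…,i_L⟩. -/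
open Finset

theorem Fin.sum_val_le_mul_card {ι : Type*} [Fintype ι] {n : ℕ} (i : ι → Fin (n + 1)) :
    ∑ k, (i k : ℕ) ≤ n * Fintype.card ι := by
  calc ∑ k, (i k : ℕ) ≤ ∑ _k : ι, n := sum_le_sum fun k _ => Fin.is_le (i k)
    _ = n * Fintype.card ι := by simp [mul_comm]

theorem weight_state_expansion_general (a L : ℕ) (ε : ℂ) :
    (fun i : Fin L → Fin (a + 1) =>
        ∑ j ∈ Finset.range (a + 1),
          (-1 : ℂ) ^ (a - j) * (a.choose j) * ∏ k, ((j : ℂ) * ε) ^ ((i k : ℕ)))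
      = (fun i : Fin L → Fin (a + 1) =>
        ∑ α ∈ Finset.range (a * L + 1),
          ε ^ α * (∑ j ∈ Finset.range (a + 1),
              (-1 : ℂ) ^ (a - j) * (a.choose j) * (j : ℂ) ^ α) *
            (if (∑ k, ((i k : ℕ))) = α then 1 else 0)) := by
  funext i
  have hweight : ∑ k, (i k : ℕ) ∈ range (a * L + 1) := by
    simpa [Nat.lt_succ_iff] using Fin.sum_val_le_mul_card i
  simp only [mul_ite, mul_one, mul_zero, sum_ite_eq, if_pos hweight, mul_sum]
  refine sum_congr rfl fun j _ => ?_
  rw [prod_pow_eq_pow_sum, mul_pow]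
  ring

theorem weight_state_expansion (a L : ℕ) (ha : 1 ≤ a) (hL : 1 ≤ L) (ε : ℂ) :
    (fun i : Fin L → Fin (a + 1) =>
        ∑ j ∈ Finset.range (a + 1),
          (-1 : ℂ) ^ (a - j) * (a.choose j) * ∏ k, ((j : ℂ) * ε) ^ ((i k : ℕ)))
      = (fun i : Fin L → Fin (a + 1) =>
        ∑ α ∈ Finset.range (a * L + 1),
          ε ^ α * (∑ j ∈ Finset.range (a + 1),
              (-1 : ℂ) ^ (a - j) * (a.choose j) * (j : ℂ) ^ α) *
            (if (∑ k, ((i k : ℕ))) = α then 1 else 0)) :=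
  weight_state_expansion_general a L ε
end

section
/- Fix a ≥ 0 and L ≥ 1 and consider |χ_{a,L}⟩ = ∑_{i₁+…+i_L = a, 0 ≤ i_k ≤ a} |i₁,…,i_L⟩ ∈ (ℂ^{a+1})^{⊗L}. Then |χ_{a,L}⟩ = (1/a!) · lim_{ε→0} ε^{-a} ∑_{j=0}^{a} (-1)^{a-j} C(a,j) |φ(jε)⟩^{⊗L}, where |φ(ε)⟩ = ∑_{i=0}^{a} ε^i |i⟩. -/
open Filter Finset Topology Nat

/-! The `j`-sum in coordinate `i` equals `D · ε^s` with `s = ∑ₖ iₖ`, where `D` is the `a`-th forward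
difference of `x ↦ x^s` at `0`. This vanishes for `s < a` and equals `a!` for `s = a`; for `s > a`
what is left is a multiple of `ε^(s-a)`, which tends to `0`. -/

theorem fwdDiff_iter_pow_apply_zero {R : Type*} [CommRing R] (a s : ℕ) :
    (fwdDiff 1)^[a] (fun r : R ↦ r ^ s) 0 =
      ∑ j ∈ range (a + 1), (-1 : R) ^ (a - j) * a.choose j * (j : R) ^ s := by
  rw [fwdDiff_iter_eq_sum_shift]
  refine sum_congr rfl fun j _ ↦ ?_
  simp [zsmul_eq_mul]

theorem tendsto_inv_pow_mul_pow_add {𝕜 : Type*} [NormedField 𝕜] (a t : ℕ) :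
    Tendsto (fun ε : 𝕜 ↦ (ε ^ a)⁻¹ * ε ^ (a + t)) (𝓝[≠] 0) (𝓝 (0 ^ t)) := by
  refine Tendsto.congr' ?_ ((continuous_pow t).tendsto 0 |>.mono_left nhdsWithin_le_nhds)
  filter_upwards [self_mem_nhdsWithin] with ε hε
  rw [pow_add, inv_mul_cancel_left₀ (pow_ne_zero a hε)]

theorem tendsto_factorial_inv_mul_fwdDiff_iter_pow {𝕜 : Type*} [NormedField 𝕜] [CharZero 𝕜]
    (a s : ℕ) :
    Tendsto
      (fun ε : 𝕜 ↦ (a ! : 𝕜)⁻¹ * (ε ^ a)⁻¹ * ((fwdDiff 1)^[a] (fun r : 𝕜 ↦ r ^ s) 0 * ε ^ s))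
      (𝓝[≠] 0) (𝓝 (if s = a then 1 else 0)) := by
  rcases lt_or_ge s a with hsa | has
  · simpa [fwdDiff_iter_pow_eq_zero_of_lt hsa, hsa.ne] using tendsto_const_nhds
  obtain ⟨t, rfl⟩ := Nat.exists_eq_add_of_le has
  have hlim := (tendsto_inv_pow_mul_pow_add a t).const_mul
    ((a ! : 𝕜)⁻¹ * (fwdDiff 1)^[a] (fun r : 𝕜 ↦ r ^ (a + t)) 0)
  rcases Nat.eq_zero_or_pos t with rfl | ht
  · simpa [fwdDiff_iter_eq_factorial, mul_assoc, mul_left_comm, Nat.factorial_ne_zero] using hlim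
  · simpa [zero_pow ht.ne', ht.ne', mul_assoc, mul_left_comm] using hlim

theorem weight_state_border_rank_limit_general (a L : ℕ) :
    Tendsto
      (fun ε : ℂ => (fun i : Fin L → Fin (a + 1) =>
        ((a.factorial : ℂ))⁻¹ * (ε ^ a)⁻¹ *
          ∑ j ∈ Finset.range (a + 1),
            (-1 : ℂ) ^ (a - j) * (a.choose j) * ∏ k, ((j : ℂ) * ε) ^ ((i k : ℕ))))
      (nhdsWithin 0 {0}ᶜ)
      (nhds (fun i : Fin L → Fin (a + 1) =>
        if (∑ k, ((i k : ℕ))) = a then (1 : ℂ) else 0)) := by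
  refine tendsto_pi_nhds.2 fun i ↦ ?_
  convert tendsto_factorial_inv_mul_fwdDiff_iter_pow (𝕜 := ℂ) a (∑ k, (i k : ℕ)) using 2 with ε
  rw [fwdDiff_iter_pow_apply_zero, sum_mul]
  refine congrArg _ (sum_congr rfl fun j _ ↦ ?_)
  rw [prod_pow_eq_pow_sum, mul_pow]
  ring

theorem weight_state_border_rank_limit (a L : ℕ) (hL : 1 ≤ L) :
    Tendsto
      (fun ε : ℂ => (fun i : Fin L → Fin (a + 1) =>
        ((a.factorial : ℂ))⁻¹ * (ε ^ a)⁻¹ *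
          ∑ j ∈ Finset.range (a + 1),
            (-1 : ℂ) ^ (a - j) * (a.choose j) * ∏ k, ((j : ℂ) * ε) ^ ((i k : ℕ))))
      (nhdsWithin 0 {0}ᶜ)
      (nhds (fun i : Fin L → Fin (a + 1) =>
        if (∑ k, ((i k : ℕ))) = a then (1 : ℂ) else 0)) :=
  weight_state_border_rank_limit_general a L
end

section
/- Fix a ≥ 0, L ≥ 2. Define matrices A_j^{(1)} = |j⟩⟨j|, A_j = ∑_{i=0}^{a-j} |i⟩⟨i+j| for middle sites, and A_j^{(L)} = ∑_{i=0}^{a} |a−j⟩⟨i|, all in M_{a+1}(ℂ), for 0 ≤ j ≤ a. Then for every basis index (i₁,…,i_L) ∈ {0,…,a}^L, the MPS coefficient given by the contraction of the matrix product A^{(1)}_{i₁} A_{i₂} ⋯ A_{i_{L-1}} A^{(L)}_{i_L} equals 1 if i₁ + i₂ + … + i_L = a, and 0 otherwise. -/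
/-- First-site tensor `A^{(1)}_j = |j⟩⟨j|`. -/
def mpsFirst (a : ℕ) (j : Fin (a + 1)) : Matrix (Fin (a + 1)) (Fin (a + 1)) ℂ :=
  Matrix.of fun r c => if r = j ∧ c = j then 1 else 0

/-- Middle-site tensor `A_j = ∑_{i=0}^{a-j} |i⟩⟨i+j|`. -/
def mpsMid (a : ℕ) (j : Fin (a + 1)) : Matrix (Fin (a + 1)) (Fin (a + 1)) ℂ :=
  Matrix.of fun r c => if (c : ℕ) = (r : ℕ) + (j : ℕ) then 1 else 0

/-- Last-site tensor `A^{(L)}_j = ∑_{i=0}^{a} |a−j⟩⟨i|`. -/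
def mpsLast (a : ℕ) (j : Fin (a + 1)) : Matrix (Fin (a + 1)) (Fin (a + 1)) ℂ :=
  Matrix.of fun r c => if (r : ℕ) = a - (j : ℕ) then 1 else 0

/-- Shift matrix with shift `s`. -/
def shiftMat (a s : ℕ) : Matrix (Fin (a + 1)) (Fin (a + 1)) ℂ :=
  Matrix.of fun r c => if (c : ℕ) = (r : ℕ) + s then 1 else 0

lemma mpsMid_eq_shiftMat (a : ℕ) (j : Fin (a + 1)) : mpsMid a j = shiftMat a (j : ℕ) := rfl

lemma shiftMat_mul (a s t : ℕ) : shiftMat a s * shiftMat a t = shiftMat a (s + t) := by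
  ext r c
  simp only [Matrix.mul_apply, shiftMat, Matrix.of_apply]
  by_cases h : (r : ℕ) + s ≤ a
  · rw [Finset.sum_eq_single (⟨(r : ℕ) + s, by omega⟩ : Fin (a + 1))]
    · simp [add_assoc]
    · intro b _ hb
      have : (b : ℕ) ≠ (r : ℕ) + s := fun hh => hb (Fin.ext hh)
      simp [this]
    · simp
  · have h1 : ∀ b : Fin (a + 1), ¬ ((b : ℕ) = (r : ℕ) + s) := by
      intro b; have := b.isLt; omega
    have h2 : ¬ ((c : ℕ) = (r : ℕ) + (s + t)) := by
      have := c.isLt; omega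
    simp [h1, h2]

lemma prod_map_shiftMat (a : ℕ) (l : List ℕ) :
    (l.map (shiftMat a)).prod = shiftMat a l.sum := by
  induction l with
  | nil =>
      simp only [List.map_nil, List.prod_nil, List.sum_nil]
      ext r c
      simp only [shiftMat, Matrix.of_apply, Matrix.one_apply, add_zero]
      by_cases h : r = c <;> simp [h, Fin.val_eq_val, eq_comm]
  | cons x xs ih =>
      simp [ih, shiftMat_mul]

lemma trace_formula (a : ℕ) (j m : Fin (a + 1)) (s : ℕ) :
    Matrix.trace (mpsFirst a j * shiftMat a s * mpsLast a m)
      = if (j : ℕ) + s + (m : ℕ) = a then 1 else 0 := by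
  have hm : (m : ℕ) ≤ a := Nat.lt_succ_iff.mp m.isLt
  have h1 : mpsFirst a j * shiftMat a s
      = Matrix.of fun r c : Fin (a+1) => if r = j ∧ (c : ℕ) = (j : ℕ) + s then (1 : ℂ) else 0 := by
    ext r c
    simp only [Matrix.mul_apply, mpsFirst, shiftMat, Matrix.of_apply]
    rw [Finset.sum_eq_single j]
    · by_cases hr : r = j <;> simp [hr]
    · intro b _ hb
      simp [hb]
    · simp
  rw [h1]
  by_cases hs : (j : ℕ) + s ≤ a
  · have h2 : (Matrix.of fun r c : Fin (a+1) => if r = j ∧ (c : ℕ) = (j : ℕ) + s then (1 : ℂ) else 0)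
        * mpsLast a m
        = Matrix.of fun r c : Fin (a+1) =>
            if r = j ∧ (j : ℕ) + s = a - (m : ℕ) then (1 : ℂ) else 0 := by
      ext r c
      simp only [Matrix.mul_apply, mpsLast, Matrix.of_apply]
      rw [Finset.sum_eq_single (⟨(j : ℕ) + s, by omega⟩ : Fin (a + 1))]
      · by_cases hr : r = j <;> simp [hr]
      · intro b _ hb
        have : (b : ℕ) ≠ (j : ℕ) + s := fun hh => hb (Fin.ext hh)
        simp [this]
      · simp
    rw [h2]
    simp only [Matrix.trace, Matrix.diag, Matrix.of_apply]
    rw [Finset.sum_eq_single j]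
    · by_cases hc : (j : ℕ) + s = a - (m : ℕ)
      · have hcc : (j : ℕ) + s + (m : ℕ) = a := by omega
        rw [if_pos ⟨rfl, hc⟩, if_pos hcc]
      · have hcc : ¬ ((j : ℕ) + s + (m : ℕ) = a) := by omega
        rw [if_neg (fun h => hc h.2), if_neg hcc]
    · intro b _ hb
      simp [hb]
    · simp
  · have h2 : ∀ c : Fin (a + 1), ¬ ((c : ℕ) = (j : ℕ) + s) := by
      intro c; have := c.isLt; omega
    have h3 : ¬ ((j : ℕ) + s + (m : ℕ) = a) := by omega
    simp only [Matrix.trace, Matrix.diag, Matrix.mul_apply, Matrix.of_apply, h3, if_false]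
    rw [Finset.sum_eq_zero]
    intro r _
    rw [Finset.sum_eq_zero]
    intro c _
    simp [h2 c]

theorem weight_state_mps_coefficient (a L : ℕ) (hL : 2 ≤ L) (i : Fin L → Fin (a + 1)) :
    Matrix.trace
      ((List.ofFn fun k : Fin L =>
        if (k : ℕ) = 0 then mpsFirst a (i k)
        else if (k : ℕ) = L - 1 then mpsLast a (i k)
        else mpsMid a (i k)).prod)
      = if (∑ k, ((i k : ℕ))) = a then 1 else 0 := by
  obtain ⟨n, rfl⟩ : ∃ n, L = n + 2 := ⟨L - 2, by omega⟩
  have htail :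
      (List.ofFn fun k : Fin (n + 1) =>
        if ((k.succ : Fin (n + 2)) : ℕ) = 0 then mpsFirst a (i k.succ)
        else if ((k.succ : Fin (n + 2)) : ℕ) = n + 2 - 1 then mpsLast a (i k.succ)
        else mpsMid a (i k.succ))
      = (List.ofFn fun k : Fin n => mpsMid a (i k.castSucc.succ))
          ++ [mpsLast a (i (Fin.last n).succ)] := by
    rw [List.ofFn_succ', List.concat_eq_append]
    congr 1
    · congr 1
      funext k
      have h1 : ((k.castSucc.succ : Fin (n + 2)) : ℕ) = (k : ℕ) + 1 := by simp
      have h2 : (k : ℕ) + 1 ≠ 0 := by omega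
      have h3 : (k : ℕ) + 1 ≠ n + 2 - 1 := by have := k.isLt; omega
      simp only [h1, h2, h3, if_false]
    · have h1 : (((Fin.last n).succ : Fin (n + 2)) : ℕ) = n + 1 := by simp
      have h2 : (n : ℕ) + 2 - 1 ≠ 0 := by omega
      have h3 : (n : ℕ) + 1 = n + 2 - 1 := by omega
      simp only [h1, h3, if_neg h2, eq_self_iff_true, if_true]
  have hlist :
      (List.ofFn fun k : Fin (n + 2) =>
        if (k : ℕ) = 0 then mpsFirst a (i k)
        else if (k : ℕ) = n + 2 - 1 then mpsLast a (i k)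
        else mpsMid a (i k))
      = mpsFirst a (i 0) ::
          ((List.ofFn fun k : Fin n => mpsMid a (i k.castSucc.succ))
            ++ [mpsLast a (i (Fin.last n).succ)]) := by
    rw [List.ofFn_succ, htail]
    simp
  rw [hlist]
  rw [List.prod_cons, List.prod_append, List.prod_singleton]
  have hmid : (List.ofFn fun k : Fin n => mpsMid a (i k.castSucc.succ)).prod
      = shiftMat a (∑ k : Fin n, ((i k.castSucc.succ : ℕ))) := by
    have : (List.ofFn fun k : Fin n => mpsMid a (i k.castSucc.succ))
        = (List.ofFn fun k : Fin n => ((i k.castSucc.succ : ℕ))).map (shiftMat a) := by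
      rw [List.map_ofFn]
      rfl
    rw [this, prod_map_shiftMat, List.sum_ofFn]
  rw [hmid, ← Matrix.mul_assoc, trace_formula]
  have hsum : ∑ k : Fin (n + 2), ((i k : ℕ))
      = (i 0 : ℕ) + (∑ k : Fin n, ((i k.castSucc.succ : ℕ))) + (i (Fin.last n).succ : ℕ) := by
    rw [Fin.sum_univ_succ, Fin.sum_univ_castSucc]
    ring
  rw [hsum]
end
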